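/- arXiv:2310.02922 — 2 statements merged into one kernel-verified Lean document; each statement's English description precedes it below -/
import Mathlib

section
/- For any density matrix ϱ on n qubits and a 2-colorable graph state |G⟩ with color classes S_1, S_2, the fidelity F = ⟨G|ϱ|G⟩ satisfies F ≥ 1/2 − (1/2)·Tr(W^{(2)} ϱ), where W^{(2)} = 3I − 2[∏_{i∈S_1}((g_i+I)/2) + ∏_{i∈S_2}((g_i+I)/2)]. -/
open Matrix BigOperators
open scoped ComplexOrder

noncomputable section

/-- Single-qubit Pauli X matrix. -/
def pauliX : Matrix (Fin 2) (Fin 2) ℂ := !![0, 1; 1, 0]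

/-- Single-qubit Pauli Z matrix. -/
def pauliZ : Matrix (Fin 2) (Fin 2) ℂ := !![1, 0; 0, -1]

/-- The operator acting as the single-qubit matrix `A` on qubit `i` and as the
identity on all other qubits. -/
def localOp {n : ℕ} (A : Matrix (Fin 2) (Fin 2) ℂ) (i : Fin n) :
    Matrix (Fin n → Fin 2) (Fin n → Fin 2) ℂ :=
  fun f g => A (f i) (g i) * ∏ j ∈ Finset.univ.erase i, if f j = g j then (1 : ℂ) else 0

/-- The product `∏_{k ∈ s} Z_k` of (commuting, diagonal) Pauli-Z operators on the
qubits in `s`. -/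
def zProd {n : ℕ} (s : Finset (Fin n)) : Matrix (Fin n → Fin 2) (Fin n → Fin 2) ℂ :=
  Matrix.diagonal fun f => ∏ k ∈ s, if f k = 1 then (-1 : ℂ) else 1

/-- The edge set of `G`, each edge listed once as an ordered pair `(i, j)` with `i < j`. -/
def edgePairs {n : ℕ} (G : SimpleGraph (Fin n)) [DecidableRel G.Adj] :
    Finset (Fin n × Fin n) :=
  Finset.univ.filter fun p => p.1 < p.2 ∧ G.Adj p.1 p.2

/-- The product `∏_{(i,j) ∈ E} CZ_{ij}` of the (commuting, diagonal) controlled-Z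
gates `CZ_{ij} = |0⟩⟨0| ⊗ I + |1⟩⟨1| ⊗ Z` over all edges of `G`. -/
def czProd {n : ℕ} (G : SimpleGraph (Fin n)) [DecidableRel G.Adj] :
    Matrix (Fin n → Fin 2) (Fin n → Fin 2) ℂ :=
  Matrix.diagonal fun f =>
    ∏ p ∈ edgePairs G, if f p.1 = 1 ∧ f p.2 = 1 then (-1 : ℂ) else 1

/-- The state `|+⟩^{⊗ n}` with `|+⟩ = (|0⟩ + |1⟩)/√2`. -/
def plusState (n : ℕ) : (Fin n → Fin 2) → ℂ := fun _ => ((Real.sqrt 2 : ℂ))⁻¹ ^ n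

/-- The graph state `|G⟩ = (∏_{(i,j) ∈ E} CZ_{ij}) |+⟩^{⊗ n}`. -/
def graphState {n : ℕ} (G : SimpleGraph (Fin n)) [DecidableRel G.Adj] :
    (Fin n → Fin 2) → ℂ :=
  (czProd G).mulVec (plusState n)

/-- The stabilizer generator `g_i = X_i ∏_{k ∈ N(i)} Z_k` of the graph state. -/
def gOp {n : ℕ} (G : SimpleGraph (Fin n)) [DecidableRel G.Adj] (i : Fin n) :
    Matrix (Fin n → Fin 2) (Fin n → Fin 2) ℂ :=
  localOp pauliX i * zProd (G.neighborFinset i)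

/-- The projector `(g_i + I)/2` onto the +1 eigenspace of the stabilizer `g_i`. -/
def stabProj {n : ℕ} (G : SimpleGraph (Fin n)) [DecidableRel G.Adj] (i : Fin n) :
    Matrix (Fin n → Fin 2) (Fin n → Fin 2) ℂ :=
  (2 : ℂ)⁻¹ • (gOp G i + 1)

/-!
The unitary `U = CZ_G · H^{⊗n}` maps `|0…0⟩` to `|G⟩` and conjugates `Z_i` to the
stabilizer `g_i` (because `H Z H = X` and `CZ_G X_i CZ_G = X_i ∏_{k ∈ N(i)} Z_k`). Hence `U†`
diagonalizes the witness: `∏_{i∈S}(g_i+I)/2` becomes the projector onto the basis states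
vanishing on `S`, and `W⁽²⁾` becomes diagonal with entry `3 − 2(χ_{S₁} + χ_{S₂})`, which is
`−1` at `0…0` and at least `1` elsewhere since `S₁ ∪ S₂` contains every qubit. For the density
matrix `σ = U†ϱU`, whose `(0…0, 0…0)` entry is the fidelity, this gives `Tr(W⁽²⁾ϱ) ≥ 1 − 2F`.
-/

namespace Matrix

variable {ι κ R : Type*} [Fintype ι] [CommSemiring R]

def piKronecker (m : ι → Matrix κ κ R) : Matrix (ι → κ) (ι → κ) R :=
  of fun f g => ∏ j, m j (f j) (g j)

@[simp]
lemma piKronecker_apply (m : ι → Matrix κ κ R) (f g : ι → κ) :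
    piKronecker m f g = ∏ j, m j (f j) (g j) := rfl

lemma piKronecker_mul [DecidableEq ι] [Fintype κ] (m m' : ι → Matrix κ κ R) :
    piKronecker m * piKronecker m' = piKronecker (m * m') := by
  ext f g
  simp only [piKronecker_apply, mul_apply, Pi.mul_apply, Finset.prod_univ_sum,
    Fintype.piFinset_univ, Finset.prod_mul_distrib]

lemma piKronecker_one [DecidableEq κ] : piKronecker (1 : ι → Matrix κ κ R) = 1 := by
  ext f g
  rw [piKronecker_apply, one_apply]
  split_ifs with h
  · exact Finset.prod_eq_one fun j _ => by rw [Pi.one_apply, h, one_apply_eq]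
  · obtain ⟨j, hj⟩ := Function.ne_iff.mp h
    exact Finset.prod_eq_zero (Finset.mem_univ j) (one_apply_ne hj)

lemma conjTranspose_piKronecker [StarRing R] (m : ι → Matrix κ κ R) :
    (piKronecker m)ᴴ = piKronecker fun j => (m j)ᴴ := by
  ext f g
  simp [conjTranspose_apply, star_prod]

lemma piKronecker_diagonal [DecidableEq κ] (d : ι → κ → R) :
    piKronecker (fun j => diagonal (d j)) = diagonal fun f => ∏ j, d j (f j) := by
  ext f g
  rw [piKronecker_apply, diagonal_apply]
  split_ifs with h
  · subst h
    simp
  · obtain ⟨j, hj⟩ := Function.ne_iff.mp h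
    exact Finset.prod_eq_zero (Finset.mem_univ j) (diagonal_apply_ne _ hj)

end Matrix

lemma localOp_eq_piKronecker {n : ℕ} (A : Matrix (Fin 2) (Fin 2) ℂ) (i : Fin n) :
    localOp A i = piKronecker (Pi.mulSingle i A) := by
  ext f g
  rw [piKronecker_apply, ← Finset.mul_prod_erase _ _ (Finset.mem_univ i), Pi.mulSingle_eq_same]
  refine congrArg _ (Finset.prod_congr rfl fun j hj => ?_)
  rw [Pi.mulSingle_eq_of_ne (Finset.ne_of_mem_erase hj), one_apply]

lemma localOp_diagonal {n : ℕ} (d : Fin 2 → ℂ) (i : Fin n) :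
    localOp (diagonal d) i = diagonal fun f => d (f i) := by
  have h : Pi.mulSingle i (diagonal d) =
      fun j => diagonal ((Pi.mulSingle i d : Fin n → Fin 2 → ℂ) j) := by
    funext j
    by_cases hj : j = i
    · subst hj; simp
    · simp [Pi.mulSingle_eq_of_ne hj]
  rw [localOp_eq_piKronecker, h, piKronecker_diagonal]
  congr 1
  funext f
  rw [Fintype.prod_eq_single i fun j hj => by rw [Pi.mulSingle_eq_of_ne hj, Pi.one_apply],
    Pi.mulSingle_eq_same]

def hadamardGate : Matrix (Fin 2) (Fin 2) ℂ := (Real.sqrt 2 : ℂ)⁻¹ • !![1, 1; 1, -1]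

lemma ofReal_sqrt_two_sq : (Real.sqrt 2 : ℂ) ^ 2 = 2 := by
  rw [← Complex.ofReal_pow, Real.sq_sqrt zero_le_two, Complex.ofReal_ofNat]

lemma hadamardGate_mul_self : hadamardGate * hadamardGate = 1 := by
  ext a b
  fin_cases a <;> fin_cases b <;>
    simp [hadamardGate, mul_apply, Fin.sum_univ_two, ← sq, ofReal_sqrt_two_sq] <;> norm_num

lemma conjTranspose_hadamardGate : hadamardGateᴴ = hadamardGate := by
  ext a b
  fin_cases a <;> fin_cases b <;> simp [hadamardGate, conjTranspose_apply]

lemma hadamardGate_mul_pauliZ_mul_hadamardGate :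
    hadamardGate * pauliZ * hadamardGate = pauliX := by
  ext a b
  fin_cases a <;> fin_cases b <;>
    simp [hadamardGate, pauliX, pauliZ, mul_apply, Fin.sum_univ_two, ← sq, ofReal_sqrt_two_sq] <;>
    norm_num

def hadamardAll (n : ℕ) : Matrix (Fin n → Fin 2) (Fin n → Fin 2) ℂ :=
  piKronecker fun _ => hadamardGate

lemma hadamardAll_mul_self (n : ℕ) : hadamardAll n * hadamardAll n = 1 := by
  rw [hadamardAll, piKronecker_mul, ← piKronecker_one]
  exact congrArg piKronecker (funext fun _ => hadamardGate_mul_self)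

lemma conjTranspose_hadamardAll (n : ℕ) : (hadamardAll n)ᴴ = hadamardAll n := by
  rw [hadamardAll, conjTranspose_piKronecker, conjTranspose_hadamardGate]

lemma hadamardAll_mul_localOp_mul_hadamardAll {n : ℕ} (A : Matrix (Fin 2) (Fin 2) ℂ)
    (i : Fin n) :
    hadamardAll n * localOp A i * hadamardAll n =
      localOp (hadamardGate * A * hadamardGate) i := by
  rw [hadamardAll, localOp_eq_piKronecker, localOp_eq_piKronecker, piKronecker_mul,
    piKronecker_mul]
  congr 1
  funext j
  by_cases hj : j = i
  · subst hj; simp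
  · simp [Pi.mulSingle_eq_of_ne hj, hadamardGate_mul_self]

lemma hadamardAll_mulVec_single_zero (n : ℕ) :
    hadamardAll n *ᵥ Pi.single 0 1 = plusState n := by
  funext f
  have hcol : ∀ a : Fin 2, hadamardGate a 0 = (Real.sqrt 2 : ℂ)⁻¹ := by
    intro a; fin_cases a <;> simp [hadamardGate]
  simp [hadamardAll, hcol, plusState]

def czSign {n : ℕ} (G : SimpleGraph (Fin n)) [DecidableRel G.Adj] (f : Fin n → Fin 2) : ℂ :=
  ∏ p ∈ edgePairs G, if f p.1 = 1 ∧ f p.2 = 1 then -1 else 1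

lemma czProd_eq_diagonal {n : ℕ} (G : SimpleGraph (Fin n)) [DecidableRel G.Adj] :
    czProd G = diagonal (czSign G) := rfl

lemma czSign_mul_self {n : ℕ} (G : SimpleGraph (Fin n)) [DecidableRel G.Adj]
    (f : Fin n → Fin 2) : czSign G f * czSign G f = 1 := by
  rw [czSign, ← Finset.prod_mul_distrib]
  exact Finset.prod_eq_one fun p _ => by split_ifs <;> norm_num

lemma czProd_mul_self {n : ℕ} (G : SimpleGraph (Fin n)) [DecidableRel G.Adj] :
    czProd G * czProd G = 1 := by
  rw [czProd_eq_diagonal, diagonal_mul_diagonal, ← diagonal_one]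
  exact congrArg diagonal (funext (czSign_mul_self G))

lemma conjTranspose_czProd {n : ℕ} (G : SimpleGraph (Fin n)) [DecidableRel G.Adj] :
    (czProd G)ᴴ = czProd G := by
  rw [czProd_eq_diagonal, diagonal_conjTranspose]
  congr 1
  funext f
  simp only [Pi.star_apply, czSign, star_prod]
  exact Finset.prod_congr rfl fun p _ => by split_ifs <;> simp

lemma prod_edgePairs_incident {n : ℕ} {M : Type*} [CommMonoid M] (G : SimpleGraph (Fin n))
    [DecidableRel G.Adj] (i : Fin n) (φ : Fin n → Fin n → M) (hφ : ∀ a b, φ a b = φ b a) :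
    ∏ p ∈ (edgePairs G).filter (fun p => p.1 = i ∨ p.2 = i), φ p.1 p.2 =
      ∏ k ∈ G.neighborFinset i, φ i k := by
  apply Finset.prod_nbij' (fun p => if p.1 = i then p.2 else p.1)
    (fun k => if i < k then (i, k) else (k, i))
  all_goals intro x hx
  all_goals simp only [edgePairs, Finset.mem_filter, Finset.mem_univ, true_and,
    SimpleGraph.mem_neighborFinset] at hx ⊢
  · rcases hx with ⟨⟨hlt, hadj⟩, rfl | rfl⟩
    · simpa using hadj
    · simpa [hlt.ne] using hadj.symm
  · rcases (G.ne_of_adj hx).lt_or_gt with h | h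
    · simpa [h] using hx
    · simpa [h.not_gt, h] using hx.symm
  · rcases hx with ⟨⟨hlt, hadj⟩, rfl | rfl⟩
    · simp [hlt]
    · simp [hlt.ne, hlt.not_gt]
  · rcases (G.ne_of_adj hx).lt_or_gt with h | h
    · simp [h]
    · simp [h.not_gt, h.ne]
  · rcases hx with ⟨-, rfl | rfl⟩
    · simp
    · split_ifs with h
      · rw [h]
      · exact hφ _ _

lemma czSign_mul_czSign_of_flip {n : ℕ} (G : SimpleGraph (Fin n)) [DecidableRel G.Adj]
    {f g : Fin n → Fin 2} {i : Fin n} (hi : f i ≠ g i) (hoff : ∀ j ≠ i, f j = g j) :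
    czSign G f * czSign G g = ∏ k ∈ G.neighborFinset i, if g k = 1 then -1 else 1 := by
  rw [czSign, czSign, ← Finset.prod_mul_distrib,
    ← Finset.prod_filter_mul_prod_filter_not _ (fun p => p.1 = i ∨ p.2 = i),
    prod_edgePairs_incident G i (fun a b => (if f a = 1 ∧ f b = 1 then (-1 : ℂ) else 1) *
      (if g a = 1 ∧ g b = 1 then -1 else 1)) (fun a b => by simp only [and_comm])]
  have h_far : ∏ p ∈ (edgePairs G).filter (fun p => ¬(p.1 = i ∨ p.2 = i)),
      (if f p.1 = 1 ∧ f p.2 = 1 then (-1 : ℂ) else 1) *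
        (if g p.1 = 1 ∧ g p.2 = 1 then -1 else 1) = 1 := by
    refine Finset.prod_eq_one fun p hp => ?_
    obtain ⟨h1, h2⟩ := not_or.mp (Finset.mem_filter.mp hp).2
    rw [hoff _ h1, hoff _ h2]
    split_ifs <;> norm_num
  rw [h_far, mul_one]
  refine Finset.prod_congr rfl fun k hk => ?_
  rw [hoff k (G.ne_of_adj ((G.mem_neighborFinset i k).mp hk)).symm]
  generalize f i = a, g i = b, g k = c at *
  fin_cases a <;> fin_cases b <;> fin_cases c <;> simp_all

lemma ne_and_forall_eq_of_localOp_pauliX_ne_zero {n : ℕ} {i : Fin n} {f g : Fin n → Fin 2}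
    (h : localOp pauliX i f g ≠ 0) : f i ≠ g i ∧ ∀ j ≠ i, f j = g j := by
  obtain ⟨hX, hrest⟩ := mul_ne_zero_iff.mp h
  refine ⟨fun hfg => hX ?_, fun j hj => ?_⟩
  · rw [hfg]
    generalize g i = a
    fin_cases a <;> simp [pauliX]
  · have := Finset.prod_ne_zero_iff.mp hrest j (Finset.mem_erase.mpr ⟨hj, Finset.mem_univ j⟩)
    exact of_not_not fun hne => this (if_neg hne)

lemma czProd_mul_localOp_pauliX {n : ℕ} (G : SimpleGraph (Fin n)) [DecidableRel G.Adj]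
    (i : Fin n) : czProd G * localOp pauliX i = gOp G i * czProd G := by
  ext f g
  rw [gOp, czProd_eq_diagonal, diagonal_mul, mul_assoc, zProd, diagonal_mul_diagonal,
    mul_diagonal]
  by_cases hX : localOp pauliX i f g = 0
  · rw [hX, mul_zero, zero_mul]
  obtain ⟨hi, hoff⟩ := ne_and_forall_eq_of_localOp_pauliX_ne_zero hX
  linear_combination (localOp pauliX i f g * czSign G g) * czSign_mul_czSign_of_flip G hi hoff -
    (localOp pauliX i f g * czSign G f) * czSign_mul_self G g

lemma mem_unitary_of_star_eq_of_mul_self {R : Type*} [Monoid R] [StarMul R] {U : R}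
    (hs : star U = U) (h : U * U = 1) : U ∈ unitary R :=
  Unitary.mem_iff.mpr ⟨by rw [hs, h], by rw [hs, h]⟩

def graphUnitary {n : ℕ} (G : SimpleGraph (Fin n)) [DecidableRel G.Adj] :
    unitaryGroup (Fin n → Fin 2) ℂ :=
  ⟨czProd G, mem_unitary_of_star_eq_of_mul_self (conjTranspose_czProd G) (czProd_mul_self G)⟩ *
    ⟨hadamardAll n, mem_unitary_of_star_eq_of_mul_self (conjTranspose_hadamardAll n)
      (hadamardAll_mul_self n)⟩

def graphConj {n : ℕ} (G : SimpleGraph (Fin n)) [DecidableRel G.Adj] :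
    Matrix (Fin n → Fin 2) (Fin n → Fin 2) ℂ ≃⋆ₐ[ℂ]
      Matrix (Fin n → Fin 2) (Fin n → Fin 2) ℂ :=
  Unitary.conjStarAlgAut ℂ _ (graphUnitary G)

lemma graphState_eq_graphUnitary_mulVec {n : ℕ} (G : SimpleGraph (Fin n))
    [DecidableRel G.Adj] :
    graphState G = (graphUnitary G : Matrix (Fin n → Fin 2) (Fin n → Fin 2) ℂ) *ᵥ
      Pi.single 0 1 := by
  rw [graphState, ← hadamardAll_mulVec_single_zero, mulVec_mulVec]
  rfl

lemma gOp_eq_graphConj {n : ℕ} (G : SimpleGraph (Fin n)) [DecidableRel G.Adj] (i : Fin n) :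
    gOp G i = graphConj G (localOp pauliZ i) := by
  have h : graphConj G (localOp pauliZ i) =
      czProd G * (hadamardAll n * localOp pauliZ i * hadamardAll n) * czProd G := by
    simp [graphConj, graphUnitary, star_eq_conjTranspose, conjTranspose_czProd,
      conjTranspose_hadamardAll, mul_assoc]
  rw [h, hadamardAll_mul_localOp_mul_hadamardAll, hadamardGate_mul_pauliZ_mul_hadamardGate,
    czProd_mul_localOp_pauliX, mul_assoc, czProd_mul_self, mul_one]

lemma pauliZ_eq_diagonal : pauliZ = diagonal ![1, -1] := by
  ext a b
  fin_cases a <;> fin_cases b <;> simp [pauliZ]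

lemma inv_two_smul_localOp_pauliZ_add_one {n : ℕ} (i : Fin n) :
    (2 : ℂ)⁻¹ • (localOp pauliZ i + 1) = diagonal fun f => if f i = 0 then 1 else 0 := by
  rw [pauliZ_eq_diagonal, localOp_diagonal, ← diagonal_one, diagonal_add, ← diagonal_smul]
  congr 1
  funext f
  rcases Fin.exists_fin_two.mp ⟨f i, rfl⟩ with h | h <;> norm_num [h]

lemma stabProj_eq_graphConj {n : ℕ} (G : SimpleGraph (Fin n)) [DecidableRel G.Adj]
    (i : Fin n) :
    stabProj G i = graphConj G (diagonal fun f => if f i = 0 then 1 else 0) := by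
  rw [← inv_two_smul_localOp_pauliZ_add_one, map_smul, map_add, map_one, ← gOp_eq_graphConj,
    stabProj]

lemma Finset.noncommProd_eq_map_prod {α M N F : Type*} [CommMonoid M] [Monoid N]
    [FunLike F M N] [MonoidHomClass F M N] (φ : F) {s : Finset α} {f : α → N} (q : α → M)
    (hf : ∀ i ∈ s, f i = φ (q i)) (comm) : s.noncommProd f comm = φ (∏ i ∈ s, q i) := by
  calc s.noncommProd f comm
      = s.noncommProd (fun i => φ (q i)) fun _ _ _ _ _ => (Commute.all _ _).map φ :=
        Finset.noncommProd_congr rfl hf _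
    _ = φ (s.noncommProd q fun _ _ _ _ _ => Commute.all _ _) := (map_noncommProd ..).symm
    _ = φ (∏ i ∈ s, q i) := by rw [Finset.noncommProd_eq_prod]

def zeroOnIndicator {n : ℕ} (S : Finset (Fin n)) (f : Fin n → Fin 2) : ℂ :=
  if ∀ i ∈ S, f i = 0 then 1 else 0

lemma noncommProd_stabProj {n : ℕ} (G : SimpleGraph (Fin n)) [DecidableRel G.Adj]
    (S : Finset (Fin n)) (hc) :
    S.noncommProd (fun i => stabProj G i) hc =
      graphConj G (diagonal (zeroOnIndicator S)) := by
  rw [Finset.noncommProd_eq_map_prod ((graphConj G : _ →+* _).comp (diagonalRingHom _ ℂ))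
    (fun i (f : Fin n → Fin 2) => if f i = 0 then (1 : ℂ) else 0) fun i _ => by
      rw [RingHom.comp_apply, diagonalRingHom_apply, stabProj_eq_graphConj]; rfl,
    RingHom.comp_apply, diagonalRingHom_apply]
  refine congrArg (graphConj G) (congrArg diagonal (funext fun f => ?_))
  simp only [zeroOnIndicator, Finset.prod_apply, Finset.prod_ite_zero, Finset.prod_const_one]

lemma star_mulVec_single_dotProduct_mulVec {ι R : Type*} [Fintype ι] [DecidableEq ι]
    [CommSemiring R] [StarRing R] (A M : Matrix ι ι R) (j : ι) :
    star (A *ᵥ Pi.single j 1) ⬝ᵥ M *ᵥ (A *ᵥ Pi.single j 1) = (Aᴴ * M * A) j j := by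
  rw [star_mulVec, ← dotProduct_mulVec, mulVec_mulVec, mulVec_mulVec]
  simp

lemma trace_mul_conjTranspose_mul {ι R : Type*} [Fintype ι] [CommSemiring R] [StarRing R]
    (U D ϱ : Matrix ι ι R) : (U * D * Uᴴ * ϱ).trace = (D * (Uᴴ * ϱ * U)).trace := by
  rw [mul_assoc, mul_assoc, trace_mul_comm]
  simp only [mul_assoc]

lemma Matrix.PosSemidef.trace_sub_two_mul_le_trace_diagonal_mul {ι : Type*} [Fintype ι]
    [DecidableEq ι] {σ : Matrix ι ι ℂ} (hσ : σ.PosSemidef) {d : ι → ℂ} (i₀ : ι)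
    (h₀ : -1 ≤ d i₀) (h : ∀ i ≠ i₀, 1 ≤ d i) :
    σ.trace - 2 * σ i₀ i₀ ≤ (diagonal d * σ).trace := by
  simp only [trace, diag_apply, diagonal_mul]
  rw [← Finset.add_sum_erase _ _ (Finset.mem_univ i₀),
    ← Finset.add_sum_erase _ _ (Finset.mem_univ i₀)]
  have h_rest :
      ∑ i ∈ Finset.univ.erase i₀, σ i i ≤ ∑ i ∈ Finset.univ.erase i₀, d i * σ i i :=
    Finset.sum_le_sum fun i hi =>
      le_mul_of_one_le_left hσ.diag_nonneg (h i (Finset.ne_of_mem_erase hi))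
  have h_diag : -σ i₀ i₀ ≤ d i₀ * σ i₀ i₀ := by
    simpa using mul_le_mul_of_nonneg_right h₀ hσ.diag_nonneg
  calc _ = -σ i₀ i₀ + ∑ i ∈ Finset.univ.erase i₀, σ i i := by ring
    _ ≤ _ := add_le_add h_diag h_rest


def witnessDiag {n : ℕ} (S₁ S₂ : Finset (Fin n)) (f : Fin n → Fin 2) : ℂ :=
  3 - 2 * (zeroOnIndicator S₁ f + zeroOnIndicator S₂ f)

lemma witnessDiag_zero {n : ℕ} (S₁ S₂ : Finset (Fin n)) : witnessDiag S₁ S₂ 0 = -1 := by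
  norm_num [witnessDiag, zeroOnIndicator]

lemma one_le_witnessDiag {n : ℕ} {S₁ S₂ : Finset (Fin n)}
    (hcover : S₁ ∪ S₂ = Finset.univ) {f : Fin n → Fin 2} (hf : f ≠ 0) :
    1 ≤ witnessDiag S₁ S₂ f := by
  obtain ⟨i, hi⟩ := Function.ne_iff.mp hf
  have hi' : i ∈ S₁ ∪ S₂ := hcover ▸ Finset.mem_univ i
  unfold witnessDiag zeroOnIndicator
  split_ifs with h₁ h₂ <;> norm_num
  rcases Finset.mem_union.mp hi' with h | h
  · exact hi (h₁ i h)
  · exact hi (h₂ i h)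

lemma witness_eq_graphConj {n : ℕ} (G : SimpleGraph (Fin n)) [DecidableRel G.Adj]
    (S₁ S₂ : Finset (Fin n)) (hc₁ hc₂) :
    (3 : ℂ) • (1 : Matrix (Fin n → Fin 2) (Fin n → Fin 2) ℂ) -
        (2 : ℂ) • (S₁.noncommProd (fun i => stabProj G i) hc₁ +
          S₂.noncommProd (fun i => stabProj G i) hc₂) =
      graphConj G (diagonal (witnessDiag S₁ S₂)) := by
  rw [noncommProd_stabProj, noncommProd_stabProj, ← map_add, ← map_one (graphConj G),
    ← map_smul, ← map_smul, ← map_sub]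
  congr 1
  ext f g
  rcases eq_or_ne f g with rfl | h <;> simp [witnessDiag, *]

theorem fidelity_ge_witness_bound_general {n : ℕ} (G : SimpleGraph (Fin n))
    [DecidableRel G.Adj] (S₁ S₂ : Finset (Fin n))
    (hcover : S₁ ∪ S₂ = Finset.univ)
    (hc₁ : (S₁ : Set (Fin n)).Pairwise fun a b => Commute (stabProj G a) (stabProj G b))
    (hc₂ : (S₂ : Set (Fin n)).Pairwise fun a b => Commute (stabProj G a) (stabProj G b))
    (ϱ : Matrix (Fin n → Fin 2) (Fin n → Fin 2) ℂ)
    (hϱ : ϱ.PosSemidef) (htr : ϱ.trace = 1) :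
    (star (graphState G) ⬝ᵥ ϱ.mulVec (graphState G)).re ≥
      1 / 2 - 1 / 2 *
        ((((3 : ℂ) • (1 : Matrix (Fin n → Fin 2) (Fin n → Fin 2) ℂ) -
          (2 : ℂ) • (S₁.noncommProd (fun i => stabProj G i) hc₁ +
            S₂.noncommProd (fun i => stabProj G i) hc₂)) * ϱ).trace).re := by
  set U := (graphUnitary G : Matrix (Fin n → Fin 2) (Fin n → Fin 2) ℂ)
  have hσ_tr : (Uᴴ * ϱ * U).trace = 1 := by
    rw [trace_mul_cycle, ← star_eq_conjTranspose,
      Unitary.mul_star_self_of_mem (graphUnitary G).prop, one_mul, htr]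
  have h_bound := (hϱ.conjTranspose_mul_mul_same U).trace_sub_two_mul_le_trace_diagonal_mul 0
    (witnessDiag_zero S₁ S₂).ge fun f hf => one_le_witnessDiag hcover hf
  rw [hσ_tr] at h_bound
  rw [graphState_eq_graphUnitary_mulVec, star_mulVec_single_dotProduct_mulVec,
    witness_eq_graphConj, graphConj, Unitary.conjStarAlgAut_apply, star_eq_conjTranspose,
    trace_mul_conjTranspose_mul]
  have h_re := (Complex.le_def.mp h_bound).1
  simp only [Complex.sub_re, Complex.one_re, Complex.mul_re, Complex.re_ofNat, Complex.im_ofNat,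
    zero_mul, sub_zero] at h_re
  linarith

/-- for any density matrix `ϱ` on `n` qubits and a 2-colorable graph
state `|G⟩` with color classes `S₁, S₂`, the fidelity `F = ⟨G|ϱ|G⟩` satisfies
`F ≥ 1/2 − (1/2)·Tr(W⁽²⁾ ϱ)`, where
`W⁽²⁾ = 3I − 2[∏_{i∈S₁}((gᵢ+I)/2) + ∏_{i∈S₂}((gᵢ+I)/2)]`. -/
theorem fidelity_ge_witness_bound {n : ℕ} (G : SimpleGraph (Fin n))
    [DecidableRel G.Adj] (S₁ S₂ : Finset (Fin n))
    (hdisj : Disjoint S₁ S₂) (hcover : S₁ ∪ S₂ = Finset.univ)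
    (hcol₁ : ∀ i ∈ S₁, ∀ j ∈ S₁, ¬ G.Adj i j)
    (hcol₂ : ∀ i ∈ S₂, ∀ j ∈ S₂, ¬ G.Adj i j)
    (hc₁ : (S₁ : Set (Fin n)).Pairwise fun a b => Commute (stabProj G a) (stabProj G b))
    (hc₂ : (S₂ : Set (Fin n)).Pairwise fun a b => Commute (stabProj G a) (stabProj G b))
    (ϱ : Matrix (Fin n → Fin 2) (Fin n → Fin 2) ℂ)
    (hϱ : ϱ.PosSemidef) (htr : ϱ.trace = 1) :
    (star (graphState G) ⬝ᵥ ϱ.mulVec (graphState G)).re ≥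
      1 / 2 - 1 / 2 *
        ((((3 : ℂ) • (1 : Matrix (Fin n → Fin 2) (Fin n → Fin 2) ℂ) -
          (2 : ℂ) • (S₁.noncommProd (fun i => stabProj G i) hc₁ +
            S₂.noncommProd (fun i => stabProj G i) hc₂)) * ϱ).trace).re :=
  fidelity_ge_witness_bound_general G S₁ S₂ hcover hc₁ hc₂ ϱ hϱ htr
end
end

section
/- Serfling's bound: Let Y_1,…,Y_T ∈ {0,1} with T = N + K, and let Π be a uniformly random K-subset of {1,…,T}, Π̄ its complement. Then for any 0 < ν < 1, Pr( Σ_{k∈Π̄} Y_k ≤ (N/K) Σ_{k∈Π} Y_k + Nν ) ≥ 1 − exp( −2ν²NK² / ((N+K)(K+1)) ). -/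
open Finset Real MeasureTheory ProbabilityTheory

/-!
For `s ⊆ {1, …, T}` let `D(s)` be the mean of `Y` minus the mean of `Y` over `sᶜ`. Drawing the
items of `s` one at a time, uniformly without replacement, `D` is a martingale (Doob's martingale
of sampling without replacement) starting at `0`, and once `j` items are drawn its next increment
ranges over an interval of length `1 / (T - j - 1)`. Hoeffding's lemma bounds each conditional
moment generating function, so after `N` draws `E exp (t D) ≤ exp (t² V / 8)` with
`V = ∑_{K ≤ i < N + K} 1 / i² ≤ N (K + 1) / ((N + K) K²)`, and a Chernoff bound with the optimal
`t` controls the `N`-sets `u` with `D(u) ≥ N ν / (N + K)`. These contain the complements of the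
`K`-sets violating the event.
-/

lemma Finset.sum_exp_mul_le_of_mem_Icc {ι : Type*} {c : Finset ι} (hc : c.Nonempty) {f : ι → ℝ}
    {a b : ℝ} (hf : ∀ i ∈ c, f i ∈ Set.Icc a b) (t : ℝ) :
    ∑ i ∈ c, exp (t * f i) ≤
      #c * exp (t * ((∑ i ∈ c, f i) / #c) + (b - a) ^ 2 * t ^ 2 / 8) := by
  let _ : MeasurableSpace c := ⊤
  have : Nonempty c := hc.to_subtype
  let μ := (PMF.uniformOfFintype c).toMeasure
  have hint (g : ι → ℝ) : ∫ i, g i ∂μ = (∑ i ∈ c, g i) / #c := by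
    rw [PMF.integral_eq_sum, ← c.sum_coe_sort g, sum_div]
    simp [PMF.uniformOfFintype_apply, div_eq_inv_mul]
  set m := (∑ i ∈ c, f i) / #c
  have hmgf := (hasSubgaussianMGF_of_mem_Icc (μ := μ) (X := fun i => f i) (a := a) (b := b)
    (measurable_of_countable _).aemeasurable (ae_of_all _ fun i => hf i i.2)).mgf_le t
  rw [mgf, hint f, hint (fun i => exp (t * (f i - m))),
    div_le_iff₀ (by exact_mod_cast hc.card_pos)] at hmgf
  have hσ : (((‖b - a‖₊ / 2) ^ 2 : NNReal) : ℝ) * t ^ 2 / 2 = (b - a) ^ 2 * t ^ 2 / 8 := by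
    simp only [NNReal.coe_pow, NNReal.coe_div, NNReal.coe_ofNat, coe_nnnorm, Real.norm_eq_abs,
      div_pow, sq_abs]
    ring
  calc ∑ i ∈ c, exp (t * f i) = exp (t * m) * ∑ i ∈ c, exp (t * (f i - m)) := by
        rw [mul_sum]; congr! 1 with i; rw [← exp_add]; ring_nf
    _ ≤ exp (t * m) * (exp ((b - a) ^ 2 * t ^ 2 / 8) * #c) := by rw [← hσ]; gcongr
    _ = _ := by rw [exp_add]; ring

lemma Finset.sum_powersetCard_sum_compl_insert {α M : Type*} [Fintype α] [DecidableEq α]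
    [AddCommMonoid M] (k : ℕ) (f : Finset α → M) :
    ∑ s ∈ powersetCard k univ, ∑ x ∈ sᶜ, f (insert x s) =
      (k + 1) • ∑ s ∈ powersetCard (k + 1) univ, f s := by
  have hcard : ∀ s ∈ powersetCard (k + 1) (univ : Finset α), (k + 1) • f s = ∑ _x ∈ s, f s := by
    intro s hs
    rw [sum_const, mem_powersetCard_univ.1 hs]
  rw [smul_sum, sum_congr rfl hcard, sum_sigma', sum_sigma']
  refine sum_nbij' (fun p => ⟨insert p.2 p.1, p.2⟩) (fun p => ⟨p.1.erase p.2, p.2⟩) ?_ ?_ ?_ ?_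
    (fun _ _ => rfl)
  · rintro ⟨s, x⟩ h
    simp only [mem_sigma, mem_powersetCard_univ, mem_compl] at h ⊢
    exact ⟨by rw [card_insert_of_notMem h.2, h.1], mem_insert_self _ _⟩
  · rintro ⟨s, x⟩ h
    simp only [mem_sigma, mem_powersetCard_univ, mem_compl] at h ⊢
    exact ⟨by rw [card_erase_of_mem h.2, h.1, Nat.add_sub_cancel], notMem_erase _ _⟩
  · rintro ⟨s, x⟩ h
    simp only [mem_sigma, mem_compl] at h
    simp [erase_insert h.2]
  · rintro ⟨s, x⟩ h
    simp only [mem_sigma] at h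
    simp [insert_erase h.2]

lemma sum_Ico_one_div_sq_le {K M : ℕ} (hK : 0 < K) (hKM : K ≤ M) :
    ∑ i ∈ Ico K M, 1 / (i : ℝ) ^ 2 ≤ ((K : ℝ) + 1) / K * (1 / K - 1 / M) := by
  have hterm : ∀ i ∈ Ico K M,
      1 / (i : ℝ) ^ 2 ≤ (K + 1) / K * (1 / i - 1 / (i + 1 : ℕ)) := by
    intro i hi
    have hKi : (K : ℝ) ≤ i := by exact_mod_cast (mem_Ico.1 hi).1
    have hK0 : (0 : ℝ) < K := by exact_mod_cast hK
    have hi0 : (0 : ℝ) < i := hK0.trans_le hKi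
    push_cast
    rw [div_sub_div _ _ hi0.ne' (by positivity), div_mul_div_comm,
      div_le_div_iff₀ (by positivity) (by positivity)]
    nlinarith
  calc ∑ i ∈ Ico K M, 1 / (i : ℝ) ^ 2
      ≤ ∑ i ∈ Ico K M, ((K : ℝ) + 1) / K * (1 / (i : ℝ) - 1 / ((i + 1 : ℕ) : ℝ)) :=
        sum_le_sum hterm
    _ = (K + 1) / K * (1 / K - 1 / M) := by
        rw [← mul_sum, ← neg_sub (1 / (M : ℝ)), ← sum_Ico_sub (fun i : ℕ => 1 / (i : ℝ)) hKM,
          ← sum_neg_distrib]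
        simp only [neg_sub]

section Sampling

variable {α : Type*} [Fintype α] [DecidableEq α] (Y : α → ℝ)

noncomputable def sampleDeviation (s : Finset α) : ℝ :=
  (∑ i, Y i) / Fintype.card α - (∑ i ∈ sᶜ, Y i) / #sᶜ

@[simp]
lemma sampleDeviation_empty : sampleDeviation Y ∅ = 0 := by
  simp [sampleDeviation]

lemma sampleDeviation_compl (s : Finset α) :
    sampleDeviation Y sᶜ = (∑ i, Y i) / Fintype.card α - (∑ i ∈ s, Y i) / #s := by
  rw [sampleDeviation, compl_compl]

lemma sampleDeviation_insert {s : Finset α} {x : α} (hx : x ∉ s) :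
    sampleDeviation Y (insert x s) =
      (∑ i, Y i) / Fintype.card α - (∑ i ∈ sᶜ, Y i - Y x) / (#sᶜ - 1 : ℕ) := by
  have hx' : x ∈ sᶜ := mem_compl.2 hx
  rw [sampleDeviation, compl_insert, sum_erase_eq_sub hx', card_erase_of_mem hx']

lemma sum_sampleDeviation_insert {s : Finset α} (hs : 1 < #sᶜ) :
    ∑ x ∈ sᶜ, sampleDeviation Y (insert x s) = #sᶜ * sampleDeviation Y s := by
  have hk : ((#sᶜ - 1 : ℕ) : ℝ) = #sᶜ - 1 := by rw [Nat.cast_sub hs.le, Nat.cast_one]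
  have hk0 : (#sᶜ : ℝ) - 1 ≠ 0 := by rw [← hk]; exact_mod_cast (Nat.sub_pos_of_lt hs).ne'
  have hc0 : (#sᶜ : ℝ) ≠ 0 := by positivity
  rw [sum_congr rfl fun x hx => sampleDeviation_insert Y (mem_compl.1 hx), sum_sub_distrib,
    sum_const, ← sum_div, sum_sub_distrib, sum_const, hk, sampleDeviation]
  simp only [nsmul_eq_mul]
  field_simp

lemma sum_exp_mul_sampleDeviation_insert_le (hY : ∀ i, Y i ∈ Set.Icc 0 1) {s : Finset α}
    (hs : 1 < #sᶜ) (t : ℝ) :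
    ∑ x ∈ sᶜ, exp (t * sampleDeviation Y (insert x s)) ≤
      #sᶜ * exp (t * sampleDeviation Y s + t ^ 2 / 8 * (1 / ((#sᶜ - 1 : ℕ) : ℝ) ^ 2)) := by
  set k : ℝ := ((#sᶜ - 1 : ℕ) : ℝ)
  have hk : 0 < k := Nat.cast_pos.2 (by omega)
  set a := (∑ i, Y i) / Fintype.card α - (∑ i ∈ sᶜ, Y i) / k
  have hrange : ∀ x ∈ sᶜ, sampleDeviation Y (insert x s) ∈ Set.Icc a (a + 1 / k) := by
    intro x hx
    rw [sampleDeviation_insert Y (mem_compl.1 hx), sub_div, ← sub_add]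
    exact ⟨le_add_of_nonneg_right (div_nonneg (hY x).1 hk.le),
      add_le_add_right (div_le_div_of_nonneg_right (hY x).2 hk.le) a⟩
  convert sum_exp_mul_le_of_mem_Icc (card_pos.1 (by omega)) hrange t using 4
  · rw [sum_sampleDeviation_insert Y hs, mul_div_cancel_left₀ _ (by positivity)]
  · ring

lemma sum_powersetCard_exp_mul_sampleDeviation_le (hY : ∀ i, Y i ∈ Set.Icc 0 1) (t : ℝ)
    {n : ℕ} (hn : n < Fintype.card α) :
    ∑ s ∈ powersetCard n univ, exp (t * sampleDeviation Y s) ≤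
      (Fintype.card α).choose n *
        exp (t ^ 2 / 8 * ∑ i ∈ Ico (Fintype.card α - n) (Fintype.card α), 1 / (i : ℝ) ^ 2) := by
  induction n with
  | zero => simp
  | succ n ih =>
    set T := Fintype.card α
    set V := fun n => ∑ i ∈ Ico (T - n) T, 1 / (i : ℝ) ^ 2
    have hV : V (n + 1) = 1 / ((T - n - 1 : ℕ) : ℝ) ^ 2 + V n := by
      simp only [V]
      rw [sum_eq_sum_Ico_succ_bot (by omega), show T - (n + 1) + 1 = T - n by omega]
      rfl
    have hcard (s) (hs : s ∈ powersetCard n (univ : Finset α)) : #sᶜ = T - n := by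
      rw [card_compl, mem_powersetCard_univ.1 hs]
    have hchoose : (T.choose (n + 1) : ℝ) * (n + 1) = T.choose n * (T - n : ℕ) := by
      exact_mod_cast Nat.choose_succ_right_eq T n
    rw [← mul_le_mul_iff_right₀ (by positivity : (0 : ℝ) < n + 1)]
    calc ((n : ℝ) + 1) * ∑ s ∈ powersetCard (n + 1) univ, exp (t * sampleDeviation Y s)
        = ∑ s ∈ powersetCard n univ, ∑ x ∈ sᶜ, exp (t * sampleDeviation Y (insert x s)) := by
          rw [sum_powersetCard_sum_compl_insert n fun s => exp (t * sampleDeviation Y s),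
            nsmul_eq_mul]; push_cast; rfl
      _ ≤ ∑ s ∈ powersetCard n univ, (T - n : ℕ) *
            exp (t * sampleDeviation Y s + t ^ 2 / 8 * (1 / ((T - n - 1 : ℕ) : ℝ) ^ 2)) := by
          refine sum_le_sum fun s hs => ?_
          have := sum_exp_mul_sampleDeviation_insert_le Y hY (s := s) (by rw [hcard s hs]; omega) t
          rwa [hcard s hs] at this
      _ = (T - n : ℕ) * exp (t ^ 2 / 8 * (1 / ((T - n - 1 : ℕ) : ℝ) ^ 2)) *
            ∑ s ∈ powersetCard n univ, exp (t * sampleDeviation Y s) := by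
          rw [mul_sum]; congr! 1 with s; rw [exp_add]; ring
      _ ≤ (T - n : ℕ) * exp (t ^ 2 / 8 * (1 / ((T - n - 1 : ℕ) : ℝ) ^ 2)) *
            (T.choose n * exp (t ^ 2 / 8 * V n)) := by gcongr; exact ih (by omega)
      _ = (n + 1) * (T.choose (n + 1) * exp (t ^ 2 / 8 * V (n + 1))) := by
          rw [hV, mul_add, exp_add]
          linear_combination (exp (t ^ 2 / 8 * (1 / ((T - n - 1 : ℕ) : ℝ) ^ 2)) *
            exp (t ^ 2 / 8 * V n)) * hchoose.symm

lemma card_filter_le_sampleDeviation_le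
    (hY : ∀ i, Y i ∈ Set.Icc 0 1) {n : ℕ} (hn : n < Fintype.card α) {θ B : ℝ} (hθ : 0 ≤ θ)
    (hB : 0 < B)
    (hVB : ∑ i ∈ Ico (Fintype.card α - n) (Fintype.card α), 1 / (i : ℝ) ^ 2 ≤ B) :
    (#{s ∈ powersetCard n univ | θ ≤ sampleDeviation Y s} : ℝ) ≤
      (Fintype.card α).choose n * exp (-(2 * θ ^ 2 / B)) := by
  set L := 4 * θ / B
  have hL : 0 ≤ L := by positivity
  calc (#{s ∈ powersetCard n univ | θ ≤ sampleDeviation Y s} : ℝ)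
      ≤ ∑ s ∈ powersetCard n univ with θ ≤ sampleDeviation Y s,
          exp (L * (sampleDeviation Y s - θ)) := by
        rw [card_eq_sum_ones, Nat.cast_sum, Nat.cast_one]
        refine sum_le_sum fun s hs => one_le_exp (mul_nonneg hL ?_)
        exact sub_nonneg.2 (mem_filter.1 hs).2
    _ ≤ ∑ s ∈ powersetCard n univ, exp (L * (sampleDeviation Y s - θ)) :=
        sum_le_sum_of_subset_of_nonneg (filter_subset _ _) fun _ _ _ => (exp_pos _).le
    _ = exp (-(L * θ)) * ∑ s ∈ powersetCard n univ, exp (L * sampleDeviation Y s) := by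
        rw [mul_sum]; congr! 1 with s; rw [← exp_add]; ring_nf
    _ ≤ exp (-(L * θ)) * ((Fintype.card α).choose n * exp (L ^ 2 / 8 * B)) := by
        grw [sum_powersetCard_exp_mul_sampleDeviation_le Y hY L hn, hVB]
    _ = (Fintype.card α).choose n * exp (-(2 * θ ^ 2 / B)) := by
        rw [mul_left_comm, ← exp_add]
        congr 2
        simp only [L]
        field_simp
        ring

end Sampling

lemma le_sampleDeviation_compl_of_lt {N K : ℕ} (hK : 0 < K) {Y : Fin (N + K) → ℝ}
    {s : Finset (Fin (N + K))} (hs : #s = K) {ν : ℝ}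
    (h : (N : ℝ) / K * ∑ k ∈ s, Y k + N * ν < ∑ k ∈ sᶜ, Y k) :
    N * ν / (N + K) ≤ sampleDeviation Y sᶜ := by
  have hK0 : (0 : ℝ) < K := by exact_mod_cast hK
  rw [div_mul_eq_mul_div, div_add' _ _ _ hK0.ne', div_lt_iff₀ hK0] at h
  rw [sampleDeviation_compl, ← sum_add_sum_compl s Y, hs, Fintype.card_fin, Nat.cast_add]
  rw [div_sub_div _ _ (by positivity) hK0.ne', div_le_div_iff₀ (by positivity) (by positivity)]
  nlinarith

lemma card_filter_lt_le_card_filter_sampleDeviation {N K : ℕ} (hK : 0 < K)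
    (Y : Fin (N + K) → ℝ) (ν : ℝ) :
    #{s ∈ powersetCard K univ | (N : ℝ) / K * ∑ k ∈ s, Y k + N * ν < ∑ k ∈ sᶜ, Y k} ≤
      #{u ∈ powersetCard N univ | N * ν / (N + K) ≤ sampleDeviation Y u} := by
  refine card_le_card_of_injOn (·ᶜ) (fun s hs => ?_) compl_injective.injOn
  obtain ⟨hsK, hs⟩ := mem_filter.1 hs
  have hsK := mem_powersetCard_univ.1 hsK
  refine mem_filter.2 ⟨mem_powersetCard_univ.2 ?_, le_sampleDeviation_compl_of_lt hK hsK hs⟩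
  rw [card_compl, hsK, Fintype.card_fin, Nat.add_sub_cancel]

lemma card_filter_lt_le_choose_mul_exp {N K : ℕ} (hN : 0 < N) (hK : 0 < K)
    {Y : Fin (N + K) → ℝ} (hY : ∀ k, Y k ∈ Set.Icc 0 1) {ν : ℝ} (hν : 0 ≤ ν) :
    (#{s ∈ powersetCard K univ | (N : ℝ) / K * ∑ k ∈ s, Y k + N * ν < ∑ k ∈ sᶜ, Y k} : ℝ) ≤
      (N + K).choose K * exp (-(2 * ν ^ 2 * N * K ^ 2) / ((N + K) * (K + 1))) := by
  set θ : ℝ := N * ν / (N + K)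
  set B : ℝ := ((K : ℝ) + 1) / K * (1 / K - 1 / (N + K))
  have hB : 0 < B := mul_pos (by positivity) (sub_pos.2 (one_div_lt_one_div_of_lt
    (by exact_mod_cast hK) (by exact_mod_cast Nat.lt_add_of_pos_left hN)))
  have htail := card_filter_le_sampleDeviation_le Y (θ := θ) hY (n := N) (by simpa)
    (by positivity) hB (by simpa [B] using sum_Ico_one_div_sq_le hK (Nat.le_add_left K N))
  have hexp : -(2 * θ ^ 2 / B) = -(2 * ν ^ 2 * N * K ^ 2) / ((N + K) * (K + 1)) := by
    have : (N : ℝ) ≠ 0 := Nat.cast_ne_zero.2 hN.ne'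
    have hB' : B = N * (K + 1) / ((N + K) * K ^ 2) := by
      simp only [B]
      field_simp
      ring
    simp only [hB', θ]
    field_simp
  rw [Fintype.card_fin, Nat.choose_symm_add, hexp] at htail
  exact (Nat.cast_le.2 (card_filter_lt_le_card_filter_sampleDeviation hK Y ν)).trans htail

theorem serfling_bound_general (N K : ℕ) (hN : 0 < N) (hK : 0 < K)
    (Y : Fin (N + K) → ℝ) (hY : ∀ k, Y k = 0 ∨ Y k = 1)
    (ν : ℝ) (hν : 0 < ν)
    (event : Finset (Fin (N + K)) → Prop)
    (hevent : ∀ s, event s ↔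
      ∑ k ∈ sᶜ, Y k ≤ (N : ℝ) / K * ∑ k ∈ s, Y k + N * ν)
    [DecidablePred event] :
    ((((Finset.univ : Finset (Fin (N + K))).powersetCard K).filter event).card : ℝ) /
      ((((Finset.univ : Finset (Fin (N + K))).powersetCard K).card : ℝ)) ≥
      1 - Real.exp (-(2 * ν ^ 2 * N * K ^ 2) / ((N + K) * (K + 1))) := by
  set P := (univ : Finset (Fin (N + K))).powersetCard K
  have hP : (#P : ℝ) = (N + K).choose K := by
    rw [card_powersetCard, card_univ, Fintype.card_fin]
  have hPpos : (0 : ℝ) < #P := by rw [hP]; exact_mod_cast Nat.choose_pos (Nat.le_add_left K N)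
  have hsplit : (#{s ∈ P | event s} : ℝ) = #P - #{s ∈ P | ¬ event s} := by
    rw [← card_filter_add_card_filter_not (s := P) event]; push_cast; ring
  have hviolation : {s ∈ P | ¬ event s} =
      {s ∈ P | (N : ℝ) / K * ∑ k ∈ s, Y k + N * ν < ∑ k ∈ sᶜ, Y k} := by
    simp only [hevent, not_le]
  have hbad := card_filter_lt_le_choose_mul_exp hN hK
    (fun k => by rcases hY k with h | h <;> simp [h]) hν.le (Y := Y)
  rw [ge_iff_le, hsplit, sub_div, div_self hPpos.ne', hviolation]
  gcongr 1 - ?_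
  rwa [div_le_iff₀' hPpos, hP]

/-- Serfling's bound: let `Y₁, …, Y_T ∈ {0,1}` with `T = N + K`, and
let `Π` be a uniformly random `K`-subset of `{1, …, T}`, `Π̄` its complement. Then
for any `0 < ν < 1`,
`Pr( Σ_{k∈Π̄} Y_k ≤ (N/K) Σ_{k∈Π} Y_k + Nν ) ≥ 1 − exp(−2ν²NK²/((N+K)(K+1)))`,
where the probability is the fraction of `K`-subsets satisfying the event. -/
theorem serfling_bound (N K : ℕ) (hN : 0 < N) (hK : 0 < K)
    (Y : Fin (N + K) → ℝ) (hY : ∀ k, Y k = 0 ∨ Y k = 1)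
    (ν : ℝ) (hν : 0 < ν) (hν1 : ν < 1)
    (event : Finset (Fin (N + K)) → Prop)
    (hevent : ∀ s, event s ↔
      ∑ k ∈ sᶜ, Y k ≤ (N : ℝ) / K * ∑ k ∈ s, Y k + N * ν)
    [DecidablePred event] :
    ((((Finset.univ : Finset (Fin (N + K))).powersetCard K).filter event).card : ℝ) /
      ((((Finset.univ : Finset (Fin (N + K))).powersetCard K).card : ℝ)) ≥
      1 - Real.exp (-(2 * ν ^ 2 * N * K ^ 2) / ((N + K) * (K + 1))) :=
  serfling_bound_general N K hN hK Y hY ν hν event hevent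
end
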